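/- arXiv:2202.10087 — 2 statements merged into one kernel-verified Lean document; each statement's English description precedes it below -/
import Mathlib

section
/- Let K be a finite field, d ≥ 0, and let φ: K → K be a field automorphism. Let a₀,…,a_d ∈ ℤ with a_d ≠ 0 and gcd(a₀,…,a_d) = 1, and suppose that a₀·s + a₁·φ(s) + ⋯ + a_d·φ^d(s) = 0 for all s ∈ K (where aᵢ·x means the scalar action of the integer aᵢ). Then there exist 0 ≤ i < j ≤ d with φ^i = φ^j; in particular the order of φ is at most d. -/
/-!
By Dedekind's independence of characters, the automorphisms `φ ^ 0, …, φ ^ d`, viewed as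
functions `K → K`, are linearly independent over `K` as long as they are pairwise distinct. The
relation then forces every `aᵢ` to vanish in `K`, so the characteristic of `K` divides
`gcd(a₀, …, a_d) = 1`, which is absurd. Two equal powers `φ ^ i = φ ^ j` give `φ ^ (j - i) = 1`.
-/

open Finset

theorem Finset.exists_intCast_ne_zero_of_gcd_eq_one {R ι : Type*} [Ring R] [Nontrivial R]
    {s : Finset ι} {a : ι → ℤ} (h : s.gcd a = 1) : ∃ i ∈ s, (a i : R) ≠ 0 := by
  by_contra! hzero
  have hdvd : (ringChar R : ℤ) ∣ s.gcd a :=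
    dvd_gcd fun i hi => (CharP.intCast_eq_zero_iff R _ _).1 (hzero i hi)
  rw [h] at hdvd
  exact CharP.ringChar_ne_one (by exact_mod_cast Int.eq_one_of_dvd_one (by positivity) hdvd)

theorem RingAut.linearIndepOn_pow {K : Type*} [CommRing K] [IsDomain K] {φ : RingAut K}
    {s : Set ℕ} (hφ : s.InjOn (φ ^ ·)) : LinearIndepOn K (fun i => ⇑(φ ^ i)) s := by
  let χ : ℕ → K →* K := fun i => (φ ^ i).toMonoidHom
  have hχ : s.InjOn χ := fun i hi j hj hij =>
    hφ hi hj (RingEquiv.ext fun x => DFunLike.congr_fun hij x)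
  exact ((linearIndependent_monoidHom K K).linearIndepOn (χ '' s)).comp_of_image hχ

theorem orderOf_le_sub_of_pow_eq_pow {G : Type*} [Group G] {x : G} {i j : ℕ} (hij : i < j)
    (h : x ^ i = x ^ j) : orderOf x ≤ j - i :=
  orderOf_le_of_pow_eq_one (Nat.sub_pos_of_lt hij) (by rw [pow_sub x hij.le, ← h, mul_inv_cancel])

theorem stmt_7_general (K : Type*) [Field K] (φ : RingAut K) (d : ℕ) (a : ℕ → ℤ)
    (hgcd : Finset.gcd (Finset.range (d + 1)) a = 1)
    (hlin : ∀ s : K, ∑ i ∈ Finset.range (d + 1), a i • ((φ ^ i) s) = 0) :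
    (∃ i j, i < j ∧ j ≤ d ∧ φ ^ i = φ ^ j) ∧ orderOf φ ≤ d := by
  have hpow : ∃ i j, i < j ∧ j ≤ d ∧ φ ^ i = φ ^ j := by
    by_contra! hne
    have hinj : (range (d + 1) : Set ℕ).InjOn (φ ^ ·) := by
      intro i hi j hj hij
      simp only [coe_range, Set.mem_Iio, Nat.lt_succ_iff] at hi hj
      rcases lt_trichotomy i j with hlt | heq | hlt
      · exact absurd hij (hne i j hlt hj)
      · exact heq
      · exact absurd hij.symm (hne j i hlt hi)
    have hsum : ∑ i ∈ range (d + 1), (a i : K) • ⇑(φ ^ i) = 0 := by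
      funext s
      simpa [Int.cast_smul_eq_zsmul] using hlin s
    obtain ⟨i, hi, hai⟩ := exists_intCast_ne_zero_of_gcd_eq_one (R := K) hgcd
    have hind := RingAut.linearIndepOn_pow (K := K) hinj
    exact hai (linearIndepOn_finset_iff.1 hind (fun i => (a i : K)) hsum i hi)
  obtain ⟨i, j, hij, hjd, heq⟩ := hpow
  exact ⟨⟨i, j, hij, hjd, heq⟩, (orderOf_le_sub_of_pow_eq_pow hij heq).trans (by omega)⟩

/-- If a field automorphism φ of a finite field K satisfies the linear
relation a₀·s + a₁·φ(s) + ⋯ + a_d·φ^d(s) = 0 for all s, with a_d ≠ 0 and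
gcd(a₀,…,a_d) = 1, then φ^i = φ^j for some 0 ≤ i < j ≤ d; in particular |φ| ≤ d. -/
theorem stmt_7 (K : Type*) [Field K] [Fintype K] (φ : RingAut K) (d : ℕ) (a : ℕ → ℤ)
    (had : a d ≠ 0) (hgcd : Finset.gcd (Finset.range (d + 1)) a = 1)
    (hlin : ∀ s : K, ∑ i ∈ Finset.range (d + 1), a i • ((φ ^ i) s) = 0) :
    (∃ i j, i < j ∧ j ≤ d ∧ φ ^ i = φ ^ j) ∧ orderOf φ ≤ d :=
  stmt_7_general K φ d a hgcd hlin
end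

section
/- Let H₀, …, H_{n-1} be subgroups of a group G that pairwise commute element-wise and generate their internal direct product, let φ be an automorphism of G with φ(H_j) = H_{(j+1) mod n} for all j, and suppose φ satisfies the ordered identity f(x) = a₀ + a₁x + ⋯ + a_d x^d with a_d ≠ 0, gcd(a₀,…,a_d) = 1, and d ≤ n - 1. Then H₀ (and hence every H_j) is trivial. -/
/-- If subgroups H₀,…,H_{n-1} pairwise commute elementwise, form an
internal direct product, are cyclically permuted by φ, and φ satisfies a primitive
ordered identity of degree d ≤ n-1 with a_d ≠ 0, then every H_j is trivial. -/
theorem stmt_10 (G : Type*) [Group G] (n : ℕ) [NeZero n] (H : Fin n → Subgroup G)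
    (hcomm : ∀ i j : Fin n, i ≠ j → ∀ x ∈ H i, ∀ y ∈ H j, Commute x y)
    (hind : iSupIndep H)
    (hsup : (⨆ j, H j) = ⊤)
    (φ : MulAut G)
    (hperm : ∀ j : Fin n, (H j).map φ.toMonoidHom = H (j + 1))
    (d : ℕ) (a : ℕ → ℤ) (had : a d ≠ 0)
    (hgcd : Finset.gcd (Finset.range (d + 1)) a = 1)
    (hd : d ≤ n - 1)
    (hφ : ∀ g : G, (((List.range (d + 1)).map fun i => ((φ ^ i) g) ^ a i).prod = 1)) :
    ∀ j : Fin n, H j = ⊥ := by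
  letI : NatCast (Fin n) := Fin.NatCast.instNatCast n
  have hn : 0 < n := Nat.pos_of_ne_zero (NeZero.ne n)
  -- injectivity of i ↦ j + i on [0, d]
  have hinj : ∀ (j : Fin n) (i k : ℕ), i ≤ d → k ≤ d →
      j + (i : Fin n) = j + (k : Fin n) → i = k := by
    intro j i k hi hk h
    have h' : (i : Fin n) = (k : Fin n) := by
      exact add_left_cancel h
    have hi' : i < n := lt_of_le_of_lt hi (Nat.lt_of_le_pred hn hd)
    have hk' : k < n := lt_of_le_of_lt hk (Nat.lt_of_le_pred hn hd)
    have := congrArg Fin.val h'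
    simpa [Fin.val_natCast, Nat.mod_eq_of_lt hi', Nat.mod_eq_of_lt hk'] using this
  intro j
  rw [eq_bot_iff]
  intro g hg
  simp only [Subgroup.mem_bot]
  -- powers of φ map H j into H (j + i)
  have hmem : ∀ i : ℕ, (φ ^ i) g ∈ H (j + (i : Fin n)) := by
    intro i
    induction i with
    | zero => simpa using hg
    | succ i ih =>
      have : φ ((φ ^ i) g) ∈ (H (j + (i : Fin n))).map φ.toMonoidHom :=
        ⟨(φ ^ i) g, ih, rfl⟩
      rw [hperm] at this
      have hcast : j + ((i : ℕ) + 1 : ℕ) = j + (i : Fin n) + 1 := by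
        letI := Fin.instCommRing n
        exact (congrArg (j + ·) (Nat.cast_succ (R := Fin n) i)).trans (add_assoc _ _ _).symm
      rw [hcast]
      have hps : (φ ^ (i + 1)) g = φ ((φ ^ i) g) := by
        rw [pow_succ']; rfl
      rw [hps]; exact this
  -- the factors of the ordered identity
  set f : ℕ → G := fun i => ((φ ^ i) g) ^ a i with hf
  have hmemf : ∀ i ∈ Finset.range (d + 1), f i ∈ H (j + (i : Fin n)) := by
    intro i _
    exact Subgroup.zpow_mem _ (hmem i) _
  have hcommf : (↑(Finset.range (d + 1)) : Set ℕ).Pairwise fun x y => Commute (f x) (f y) := by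
    intro x hx y hy hxy
    simp only [Finset.coe_range, Set.mem_Iio] at hx hy
    have hne : j + (x : Fin n) ≠ j + (y : Fin n) := fun h =>
      hxy (hinj j x y (Nat.lt_succ_iff.mp hx) (Nat.lt_succ_iff.mp hy) h)
    exact hcomm _ _ hne _ (Subgroup.zpow_mem _ (hmem x) _) _ (Subgroup.zpow_mem _ (hmem y) _)
  -- the modified family of subgroups, independent
  set K : ℕ → Subgroup G := fun i => if i ≤ d then H (j + (i : Fin n)) else ⊥ with hK
  have hKind : iSupIndep K := by
    intro i
    by_cases hi : i ≤ d
    · have h1 : K i = H (j + (i : Fin n)) := if_pos hi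
      rw [h1]
      refine Disjoint.mono_right ?_ (hind (j + (i : Fin n)))
      refine iSup_le fun k => iSup_le fun hk => ?_
      by_cases hkd : k ≤ d
      · have : K k = H (j + (k : Fin n)) := if_pos hkd
        rw [this]
        have hne : j + (k : Fin n) ≠ j + (i : Fin n) := fun h => hk (hinj j k i hkd hi h)
        exact le_iSup₂ (f := fun m (_ : m ≠ j + (i : Fin n)) => H m) _ hne
      · have : K k = ⊥ := if_neg hkd
        rw [this]; exact bot_le
    · have : K i = ⊥ := if_neg hi
      rw [this]; exact disjoint_bot_left
  have hmemK : ∀ i ∈ Finset.range (d + 1), f i ∈ K i := by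
    intro i hi
    have hid : i ≤ d := Nat.lt_succ_iff.mp (Finset.mem_range.mp hi)
    rw [hK]; simp only [if_pos hid]
    exact hmemf i hi
  -- product equals 1
  have hprod : (Finset.range (d + 1)).noncommProd f hcommf = 1 := by
    have h0 := hφ g
    rw [Finset.noncommProd]
    simp only [Finset.range_val, Multiset.range, Multiset.map_coe, Multiset.noncommProd_coe]
    exact h0
  have := Subgroup.eq_one_of_noncommProd_eq_one_of_iSupIndep _ f hcommf K hKind hmemK hprod
  -- each g ^ a i = 1
  have hpow : ∀ i ≤ d, g ^ a i = 1 := by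
    intro i hi
    have h1 : f i = 1 := this i (Finset.mem_range.mpr (Nat.lt_succ_of_le hi))
    have : (φ ^ i) (g ^ a i) = 1 := by
      rw [map_zpow]; exact h1
    have := congrArg (φ ^ i).symm this
    simpa using this
  -- Bézout
  have hdvd : (orderOf g : ℤ) ∣ 1 := by
    rw [← hgcd]
    refine Finset.dvd_gcd fun i hi => ?_
    exact orderOf_dvd_iff_zpow_eq_one.mpr (hpow i (Nat.lt_succ_iff.mp (Finset.mem_range.mp hi)))
  have : orderOf g = 1 := by
    have : orderOf g ∣ 1 := Int.natCast_dvd_natCast.mp (by exact_mod_cast hdvd)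
    exact Nat.eq_one_of_dvd_one this
  exact orderOf_eq_one_iff.mp this
end
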